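/- arXiv:1803.11163 — 10 statements merged into one kernel-verified Lean document; each statement's English description precedes it below -/
import Mathlib

section
/- Fix dimensions n, p, k, a horizon T ∈ ℕ, an initial state z₀ ∈ ℝⁿ, and a cost vector c ∈ ℝⁿ with c ≥ 0 componentwise. For each t < T let F̄_t : ℝⁿ × ℝᵖ → ℝⁿ and Ḡ_t : ℝⁿ × ℝᵖ → ℝᵏ be maps such that for every fixed v ∈ ℝᵖ the maps z ↦ F̄_t(z, v) and z ↦ Ḡ_t(z, v) are monotone. Call a realization any pair of sequences of maps f_t : ℝⁿ × ℝᵖ → ℝⁿ and g_t : ℝⁿ × ℝᵖ → ℝᵏ (t < T) with f_t(z,v) ≤ F̄_t(z,v) and g_t(z,v) ≤ Ḡ_t(z,v) for all (z,v). A time-varying state-feedback policy (π_t : ℝⁿ → ℝᵖ)_{t<T} is feasible if for every realization the closed-loop trajectory z(0) = z₀, z(t+1) = f_t(z(t), π_t(z(t))) satisfies g_t(z(t), π_t(z(t))) ≤ 0 for all t < T; its cost under a realization is Σ_{t=0}^{T} c·z(t). Suppose v* = (v*(t))_{t<T} is a nominal-optimal open-loop control sequence, i.e. its nominal trajectory z*(0)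 = z₀, z*(t+1) = F̄_t(z*(t), v*(t)) satisfies Ḡ_t(z*(t), v*(t)) ≤ 0 for all t < T, and its nominal cost C̄ := Σ_{t=0}^{T} c·z*(t) is minimal among all open-loop sequences whose nominal trajectories satisfy these constraints. Then: (i) the open-loop policy π*_t(z) := v*(t) is feasible, and for every realization its closed-loop trajectory satisfies z(t) ≤ z*(t) for all t ≤ T and has cost at most C̄; (ii) every feasible policy has cost at least C̄ under the nominal realization (f_t, g_t) = (F̄_t, Ḡ_t). Consequently the min over feasible policies of the max over realizations of the cost equals C̄, attained by π* together with the nominal (worst-case) realization. -/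
/-- Closed-loop trajectory of dynamics `f` under a time-varying state-feedback
policy `π`, started at `z0`. -/
def closedLoop {n p : ℕ} (z0 : Fin n → ℝ)
    (f : ℕ → (Fin n → ℝ) → (Fin p → ℝ) → Fin n → ℝ)
    (π : ℕ → (Fin n → ℝ) → Fin p → ℝ) : ℕ → Fin n → ℝ
  | 0 => z0
  | t + 1 => f t (closedLoop z0 f π t) (π t (closedLoop z0 f π t))

/-- A realization: dynamics and constraint maps dominated pointwise by the
nominal (worst-case) maps `F̄`, `Ḡ` at every time `t < T`. -/
def IsRealization {n p k : ℕ} (T : ℕ)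
    (Fbar : ℕ → (Fin n → ℝ) → (Fin p → ℝ) → Fin n → ℝ)
    (Gbar : ℕ → (Fin n → ℝ) → (Fin p → ℝ) → Fin k → ℝ)
    (f : ℕ → (Fin n → ℝ) → (Fin p → ℝ) → Fin n → ℝ)
    (g : ℕ → (Fin n → ℝ) → (Fin p → ℝ) → Fin k → ℝ) : Prop :=
  ∀ t < T, ∀ z v, f t z v ≤ Fbar t z v ∧ g t z v ≤ Gbar t z v

/-- A feasible policy: the closed loop satisfies the constraints for every
realization. -/
def FeasiblePolicy {n p k : ℕ} (T : ℕ)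
    (Fbar : ℕ → (Fin n → ℝ) → (Fin p → ℝ) → Fin n → ℝ)
    (Gbar : ℕ → (Fin n → ℝ) → (Fin p → ℝ) → Fin k → ℝ)
    (z0 : Fin n → ℝ) (π : ℕ → (Fin n → ℝ) → Fin p → ℝ) : Prop :=
  ∀ f g, IsRealization T Fbar Gbar f g →
    ∀ t < T, g t (closedLoop z0 f π t) (π t (closedLoop z0 f π t)) ≤ 0

/-- Cost of a policy `π` under realized dynamics `f`: `Σ_{t=0}^{T} c·z(t)`. -/
def policyCost {n p : ℕ} (T : ℕ) (c z0 : Fin n → ℝ)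
    (f : ℕ → (Fin n → ℝ) → (Fin p → ℝ) → Fin n → ℝ)
    (π : ℕ → (Fin n → ℝ) → Fin p → ℝ) : ℝ :=
  ∑ t ∈ Finset.range (T + 1), ∑ i, c i * closedLoop z0 f π t i

/-- monotone-system form of paper Theorem 1, robust FNC:
let `(F̄, Ḡ)` be nominal (worst-case) dynamics and constraints, monotone in the
state for every fixed control, and let `v*` be a nominal-optimal open-loop
control sequence with nominal trajectory `z*` and nominal cost `C̄`.  Then
(i) the open-loop policy `π*(t, z) := v*(t)` is feasible, and for every
realization its closed loop is dominated by `z*` and costs at most `C̄`;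
(ii) every feasible policy costs at least `C̄` under the nominal realization;
consequently the min over feasible policies of the max over realizations of
the cost equals `C̄`, attained by `π*` and the nominal realization. -/
theorem robust_fnc_counterpart
    (n p k T : ℕ) (z0 : Fin n → ℝ) (c : Fin n → ℝ) (hc : 0 ≤ c)
    (Fbar : ℕ → (Fin n → ℝ) → (Fin p → ℝ) → Fin n → ℝ)
    (Gbar : ℕ → (Fin n → ℝ) → (Fin p → ℝ) → Fin k → ℝ)
    (hFmono : ∀ t < T, ∀ v : Fin p → ℝ, Monotone fun z => Fbar t z v)
    (hGmono : ∀ t < T, ∀ v : Fin p → ℝ, Monotone fun z => Gbar t z v)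
    (vstar : ℕ → Fin p → ℝ) (zstar : ℕ → Fin n → ℝ)
    (hzstar0 : zstar 0 = z0)
    (hzstarRec : ∀ t < T, zstar (t + 1) = Fbar t (zstar t) (vstar t))
    (hzstarFeas : ∀ t < T, Gbar t (zstar t) (vstar t) ≤ 0)
    (Cbar : ℝ) (hCbar : Cbar = ∑ t ∈ Finset.range (T + 1), ∑ i, c i * zstar t i)
    (hOpt : ∀ (v : ℕ → Fin p → ℝ) (zv : ℕ → Fin n → ℝ),
      zv 0 = z0 →
      (∀ t < T, zv (t + 1) = Fbar t (zv t) (v t)) →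
      (∀ t < T, Gbar t (zv t) (v t) ≤ 0) →
      Cbar ≤ ∑ t ∈ Finset.range (T + 1), ∑ i, c i * zv t i) :
    -- (i) the open-loop policy `π*_t(z) := v*(t)` is feasible …
    FeasiblePolicy T Fbar Gbar z0 (fun t _ => vstar t) ∧
    -- … and for every realization its closed loop is dominated by `z*`
    -- and has cost at most `C̄`;
    (∀ f g, IsRealization T Fbar Gbar f g →
      (∀ t ≤ T, closedLoop z0 f (fun t _ => vstar t) t ≤ zstar t) ∧
      policyCost T c z0 f (fun t _ => vstar t) ≤ Cbar) ∧
    -- (ii) every feasible policy costs at least `C̄` under the nominal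
    -- realization `(F̄, Ḡ)`;
    (∀ π : ℕ → (Fin n → ℝ) → Fin p → ℝ, FeasiblePolicy T Fbar Gbar z0 π →
      Cbar ≤ policyCost T c z0 Fbar π) ∧
    -- the minimax value `C̄` is attained by `π*` together with the nominal
    -- (worst-case) realization.
    policyCost T c z0 Fbar (fun t _ => vstar t) = Cbar := by
  -- domination lemma for any realization
  have dom : ∀ f g, IsRealization T Fbar Gbar f g →
      ∀ t ≤ T, closedLoop z0 f (fun t _ => vstar t) t ≤ zstar t := by
    intro f g hfg t
    induction t with
    | zero => intro _; simp [closedLoop, hzstar0]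
    | succ t ih =>
      intro ht
      have htT : t < T := Nat.lt_of_succ_le ht
      have ihz := ih (Nat.le_of_lt htT)
      calc closedLoop z0 f (fun t _ => vstar t) (t + 1)
          = f t (closedLoop z0 f (fun t _ => vstar t) t) (vstar t) := rfl
        _ ≤ Fbar t (closedLoop z0 f (fun t _ => vstar t) t) (vstar t) :=
            (hfg t htT _ _).1
        _ ≤ Fbar t (zstar t) (vstar t) := hFmono t htT (vstar t) ihz
        _ = zstar (t + 1) := (hzstarRec t htT).symm
  have costle : ∀ f g, IsRealization T Fbar Gbar f g →
      policyCost T c z0 f (fun t _ => vstar t) ≤ Cbar := by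
    intro f g hfg
    rw [hCbar]
    apply Finset.sum_le_sum
    intro t ht
    apply Finset.sum_le_sum
    intro i _
    have := dom f g hfg t (Nat.lt_succ_iff.mp (Finset.mem_range.mp ht))
    exact mul_le_mul_of_nonneg_left (this i) (hc i)
  have eqstar : ∀ t ≤ T, closedLoop z0 Fbar (fun t _ => vstar t) t = zstar t := by
    intro t
    induction t with
    | zero => intro _; simp [closedLoop, hzstar0]
    | succ t ih =>
      intro ht
      have htT : t < T := Nat.lt_of_succ_le ht
      have ihz := ih (Nat.le_of_lt htT)
      show Fbar t (closedLoop z0 Fbar (fun t _ => vstar t) t) (vstar t) = zstar (t + 1)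
      rw [ihz, hzstarRec t htT]
  refine ⟨?_, ?_, ?_, ?_⟩
  · intro f g hfg t ht
    calc g t (closedLoop z0 f (fun t _ => vstar t) t) (vstar t)
        ≤ Gbar t (closedLoop z0 f (fun t _ => vstar t) t) (vstar t) := (hfg t ht _ _).2
      _ ≤ Gbar t (zstar t) (vstar t) := hGmono t ht (vstar t) (dom f g hfg t ht.le)
      _ ≤ 0 := hzstarFeas t ht
  · intro f g hfg
    exact ⟨dom f g hfg, costle f g hfg⟩
  · intro π hπ
    have hnom : IsRealization T Fbar Gbar Fbar Gbar := fun t _ z v => ⟨le_rfl, le_rfl⟩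
    exact hOpt (fun t => π t (closedLoop z0 Fbar π t)) (closedLoop z0 Fbar π) rfl
      (fun t _ => rfl) (fun t ht => hπ Fbar Gbar hnom t ht)
  · unfold policyCost
    rw [hCbar]
    exact Finset.sum_congr rfl fun t ht => Finset.sum_congr rfl fun i _ => by
      rw [eqstar t (Nat.lt_succ_iff.mp (Finset.mem_range.mp ht))]
end

section
/- Fix dimensions n, p, m, k, a horizon T ∈ ℕ, an initial state z₀ ∈ ℝⁿ, and a cost vector c ∈ ℝⁿ with c ≥ 0 componentwise. For each t < T let F̄_t : ℝⁿ × ℝᵖ × ℝᵐ → ℝⁿ and Ḡ_t : ℝⁿ × ℝᵖ × ℝᵐ → ℝᵏ be such that for every fixed control v ∈ ℝᵖ the maps (z, ω) ↦ F̄_t(z, v, ω) and (z, ω) ↦ Ḡ_t(z, v, ω) are monotone, and let f_t, g_t satisfy f_t(z,v,ω) ≤ F̄_t(z,v,ω) and g_t(z,v,ω) ≤ Ḡ_t(z,v,ω) for all arguments. Let ω(t) ≤ ω̄(t) for all t < T. Suppose v̄ = (v̄(t))_{t<T} is an open-loop control sequence whose nominal trajectory z*(0) = z₀, z*(t+1)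 = F̄_t(z*(t), v̄(t), ω̄(t)) satisfies Ḡ_t(z*(t), v̄(t), ω̄(t)) ≤ 0 for all t < T. Then the trajectory z(0) = z₀, z(t+1) = f_t(z(t), v̄(t), ω(t)) generated by the same controls under the realization (f, g, ω) satisfies z(t) ≤ z*(t) for all t ≤ T, satisfies g_t(z(t), v̄(t), ω(t)) ≤ 0 for all t < T, and achieves cost Σ_{t=0}^{T} c·z(t) ≤ Σ_{t=0}^{T} c·z*(t). In particular, the infimum of the cost over controls feasible for the realization (f, g, ω) is at most the infimum of the nominal cost over controls feasible for (F̄, Ḡ, ω̄). -/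

private lemma aux_dom
    (n p m k T : ℕ) (z0 : Fin n → ℝ) (c : Fin n → ℝ) (hc : 0 ≤ c)
    (Fbar : ℕ → (Fin n → ℝ) → (Fin p → ℝ) → (Fin m → ℝ) → Fin n → ℝ)
    (Gbar : ℕ → (Fin n → ℝ) → (Fin p → ℝ) → (Fin m → ℝ) → Fin k → ℝ)
    (hFmono : ∀ t < T, ∀ v : Fin p → ℝ,
      Monotone fun zω : (Fin n → ℝ) × (Fin m → ℝ) => Fbar t zω.1 v zω.2)
    (hGmono : ∀ t < T, ∀ v : Fin p → ℝ,
      Monotone fun zω : (Fin n → ℝ) × (Fin m → ℝ) => Gbar t zω.1 v zω.2)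
    (f : ℕ → (Fin n → ℝ) → (Fin p → ℝ) → (Fin m → ℝ) → Fin n → ℝ)
    (g : ℕ → (Fin n → ℝ) → (Fin p → ℝ) → (Fin m → ℝ) → Fin k → ℝ)
    (hf : ∀ t < T, ∀ z v ω, f t z v ω ≤ Fbar t z v ω)
    (hg : ∀ t < T, ∀ z v ω, g t z v ω ≤ Gbar t z v ω)
    (ω ωbar : ℕ → Fin m → ℝ) (hω : ∀ t < T, ω t ≤ ωbar t)
    (vbar : ℕ → Fin p → ℝ)
    (zstar : ℕ → Fin n → ℝ) (hzstar0 : zstar 0 = z0)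
    (hzstarRec : ∀ t < T, zstar (t + 1) = Fbar t (zstar t) (vbar t) (ωbar t))
    (hGstar : ∀ t < T, Gbar t (zstar t) (vbar t) (ωbar t) ≤ 0)
    (z : ℕ → Fin n → ℝ) (hz0 : z 0 = z0)
    (hzRec : ∀ t < T, z (t + 1) = f t (z t) (vbar t) (ω t)) :
    (∀ t ≤ T, z t ≤ zstar t) ∧
    (∀ t < T, g t (z t) (vbar t) (ω t) ≤ 0) ∧
    ((∑ t ∈ Finset.range (T + 1), ∑ i, c i * z t i)
      ≤ ∑ t ∈ Finset.range (T + 1), ∑ i, c i * zstar t i) := by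
  have hdom : ∀ t ≤ T, z t ≤ zstar t := by
    intro t
    induction t with
    | zero => intro _; rw [hz0, hzstar0]
    | succ t ih =>
      intro hle
      have ht : t < T := Nat.lt_of_succ_le hle
      have h1 := ih (le_of_lt hle)
      rw [hzRec t ht, hzstarRec t ht]
      calc f t (z t) (vbar t) (ω t) ≤ Fbar t (z t) (vbar t) (ω t) := hf t ht _ _ _
        _ ≤ Fbar t (zstar t) (vbar t) (ωbar t) :=
          hFmono t ht (vbar t) (Prod.mk_le_mk.mpr ⟨h1, hω t ht⟩)
  refine ⟨hdom, ?_, ?_⟩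
  · intro t ht
    calc g t (z t) (vbar t) (ω t) ≤ Gbar t (z t) (vbar t) (ω t) := hg t ht _ _ _
      _ ≤ Gbar t (zstar t) (vbar t) (ωbar t) :=
        hGmono t ht (vbar t) (Prod.mk_le_mk.mpr ⟨hdom t (le_of_lt ht), hω t ht⟩)
      _ ≤ 0 := hGstar t ht
  · refine Finset.sum_le_sum fun t htr => Finset.sum_le_sum fun i _ => ?_
    have ht : t ≤ T := Nat.lt_succ_iff.mp (Finset.mem_range.mp htr)
    exact mul_le_mul_of_nonneg_left (hdom t ht i) (hc i)

/-- monotone-system form of paper Corollary 1: if the nominal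
dynamics and constraints `(F̄, Ḡ)` are monotone in state and uncertainty for
every fixed control, `(f, g)` are dominated pointwise by `(F̄, Ḡ)`, and the
uncertainty `ω` is dominated by `ω̄`, then applying any nominally feasible
open-loop controls `v̄` under the realization `(f, g, ω)` produces a trajectory
dominated by the nominal one, feasible for `g`, and with no larger cumulative
linear cost; in particular every nominally feasible control gives rise to a
control feasible for the realization with cost at most its nominal cost. -/
theorem optimal_cost_monotone_in_uncertainty
    (n p m k T : ℕ) (z0 : Fin n → ℝ) (c : Fin n → ℝ) (hc : 0 ≤ c)
    (Fbar : ℕ → (Fin n → ℝ) → (Fin p → ℝ) → (Fin m → ℝ) → Fin n → ℝ)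
    (Gbar : ℕ → (Fin n → ℝ) → (Fin p → ℝ) → (Fin m → ℝ) → Fin k → ℝ)
    (hFmono : ∀ t < T, ∀ v : Fin p → ℝ,
      Monotone fun zω : (Fin n → ℝ) × (Fin m → ℝ) => Fbar t zω.1 v zω.2)
    (hGmono : ∀ t < T, ∀ v : Fin p → ℝ,
      Monotone fun zω : (Fin n → ℝ) × (Fin m → ℝ) => Gbar t zω.1 v zω.2)
    (f : ℕ → (Fin n → ℝ) → (Fin p → ℝ) → (Fin m → ℝ) → Fin n → ℝ)
    (g : ℕ → (Fin n → ℝ) → (Fin p → ℝ) → (Fin m → ℝ) → Fin k → ℝ)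
    (hf : ∀ t < T, ∀ z v ω, f t z v ω ≤ Fbar t z v ω)
    (hg : ∀ t < T, ∀ z v ω, g t z v ω ≤ Gbar t z v ω)
    (ω ωbar : ℕ → Fin m → ℝ) (hω : ∀ t < T, ω t ≤ ωbar t)
    (vbar : ℕ → Fin p → ℝ)
    (zstar : ℕ → Fin n → ℝ) (hzstar0 : zstar 0 = z0)
    (hzstarRec : ∀ t < T, zstar (t + 1) = Fbar t (zstar t) (vbar t) (ωbar t))
    (hGstar : ∀ t < T, Gbar t (zstar t) (vbar t) (ωbar t) ≤ 0)
    (z : ℕ → Fin n → ℝ) (hz0 : z 0 = z0)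
    (hzRec : ∀ t < T, z (t + 1) = f t (z t) (vbar t) (ω t)) :
    (∀ t ≤ T, z t ≤ zstar t) ∧
    (∀ t < T, g t (z t) (vbar t) (ω t) ≤ 0) ∧
    ((∑ t ∈ Finset.range (T + 1), ∑ i, c i * z t i)
      ≤ ∑ t ∈ Finset.range (T + 1), ∑ i, c i * zstar t i) ∧
    (∀ (v' : ℕ → Fin p → ℝ) (z' : ℕ → Fin n → ℝ),
      z' 0 = z0 →
      (∀ t < T, z' (t + 1) = Fbar t (z' t) (v' t) (ωbar t)) →
      (∀ t < T, Gbar t (z' t) (v' t) (ωbar t) ≤ 0) →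
      ∃ (v'' : ℕ → Fin p → ℝ) (z'' : ℕ → Fin n → ℝ),
        z'' 0 = z0 ∧
        (∀ t < T, z'' (t + 1) = f t (z'' t) (v'' t) (ω t)) ∧
        (∀ t < T, g t (z'' t) (v'' t) (ω t) ≤ 0) ∧
        (∑ t ∈ Finset.range (T + 1), ∑ i, c i * z'' t i)
          ≤ ∑ t ∈ Finset.range (T + 1), ∑ i, c i * z' t i) := by
  obtain ⟨h1, h2, h3⟩ := aux_dom n p m k T z0 c hc Fbar Gbar hFmono hGmono f g hf hg
    ω ωbar hω vbar zstar hzstar0 hzstarRec hGstar z hz0 hzRec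
  refine ⟨h1, h2, h3, ?_⟩
  intro v' z' hz'0 hz'Rec hG'
  set z'' : ℕ → Fin n → ℝ := fun t => Nat.rec z0 (fun t zt => f t zt (v' t) (ω t)) t with hz''
  have hz''0 : z'' 0 = z0 := rfl
  have hz''Rec : ∀ t < T, z'' (t + 1) = f t (z'' t) (v' t) (ω t) := fun t _ => rfl
  obtain ⟨g1, g2, g3⟩ := aux_dom n p m k T z0 c hc Fbar Gbar hFmono hGmono f g hf hg
    ω ωbar hω v' z' hz'0 hz'Rec hG' z'' hz''0 hz''Rec
  exact ⟨v', z'', hz''0, hz''Rec, g2, g3⟩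
end

section
/- Let ι be a finite index type, e ∈ ι, and let β : ι → ℝ satisfy β_i ≥ 0 for all i and β_e = 0. Let l > 0, γ ≥ 0, Δt ≥ 0 with Δt·γ ≤ l, and let d : ℝ → ℝ be nondecreasing and γ-Lipschitz. Define F : (ι → ℝ) → ℝ by F(z) := z_e − Δt · d((z_e − Σ_{i∈ι} β_i z_i)/l). Then F is monotone: whenever z_i ≤ z'_i for all i ∈ ι, one has F(z) ≤ F(z'). -/
/-- paper Lemma 2, part (i): monotonicity of the auxiliary demand
function `f^d_e(z) = z_e − Δt · d((z_e − Σ_i β_i z_i)/l)` of the transformed cell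
transmission model, for a nondecreasing `γ`-Lipschitz demand function `d`,
nonnegative turning ratios `β` with `β e = 0`, cell length `l > 0`, and a
sampling time satisfying `Δt·γ ≤ l`. -/
theorem aux_demand_monotone
    (ι : Type*) [Fintype ι] (e : ι)
    (β : ι → ℝ) (hβ : ∀ i, 0 ≤ β i) (hβe : β e = 0)
    (l : ℝ) (hl : 0 < l)
    (γ : ℝ) (hγ : 0 ≤ γ)
    (Δt : ℝ) (hΔt : 0 ≤ Δt) (hΔtγ : Δt * γ ≤ l)
    (d : ℝ → ℝ) (hd : Monotone d)
    (hdLip : ∀ x y : ℝ, |d x - d y| ≤ γ * |x - y|)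
    (z z' : ι → ℝ) (hz : ∀ i, z i ≤ z' i) :
    z e - Δt * d ((z e - ∑ i, β i * z i) / l)
      ≤ z' e - Δt * d ((z' e - ∑ i, β i * z' i) / l) := by
  set ρ := (z e - ∑ i, β i * z i) / l with hρ
  set ρ' := (z' e - ∑ i, β i * z' i) / l with hρ'
  have hze : z e ≤ z' e := hz e
  rcases le_or_gt ρ' ρ with h | h
  · have : d ρ' ≤ d ρ := hd h
    nlinarith
  · -- ρ' - ρ ≤ (z' e - z e)/l
    have hsum : ∑ i, β i * z i ≤ ∑ i, β i * z' i :=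
      Finset.sum_le_sum fun i _ => mul_le_mul_of_nonneg_left (hz i) (hβ i)
    have hdiff : ρ' - ρ ≤ (z' e - z e) / l := by
      rw [hρ, hρ', div_sub_div_same]
      apply div_le_div_of_nonneg_right ?_ hl.le |>.trans_eq rfl
      linarith
    have hlip : d ρ' - d ρ ≤ γ * (ρ' - ρ) := by
      have := hdLip ρ' ρ
      rw [abs_of_pos (by linarith : (0:ℝ) < ρ' - ρ)] at this
      exact (le_abs_self _).trans this
    have key : Δt * (d ρ' - d ρ) ≤ z' e - z e := by
      have h1 : Δt * (d ρ' - d ρ) ≤ Δt * (γ * (ρ' - ρ)) :=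
        mul_le_mul_of_nonneg_left hlip hΔt
      have h2 : Δt * (γ * (ρ' - ρ)) ≤ Δt * (γ * ((z' e - z e) / l)) := by
        apply mul_le_mul_of_nonneg_left _ hΔt
        exact mul_le_mul_of_nonneg_left hdiff hγ
      have h3 : Δt * (γ * ((z' e - z e) / l)) ≤ z' e - z e := by
        have h4 : Δt * γ * ((z' e - z e) / l) ≤ l * ((z' e - z e) / l) :=
          mul_le_mul_of_nonneg_right hΔtγ (div_nonneg (by linarith) hl.le)
        have h5 : l * ((z' e - z e) / l) = z' e - z e := by field_simp
        nlinarith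
      linarith
    linarith
end

section
/- Let γ ≥ 0, β > 0, l > 0, and Δt ≥ 0 with Δt·γ ≤ l, and let s : ℝ → ℝ be nonincreasing and γ-Lipschitz. Define F : ℝ × ℝ → ℝ by F(x, y) := y − (Δt/β) · s((x − β·y)/l). Then F is monotone in both arguments: whenever x ≤ x' and y ≤ y', one has F(x, y) ≤ F(x', y'). -/
/-- paper Lemma 2, part (ii): monotonicity of the auxiliary supply
function `f^s(x, y) = y − (Δt/β) · s((x − β·y)/l)` of the transformed cell
transmission model, for a nonincreasing `γ`-Lipschitz supply function `s`,
turning ratio `β > 0`, cell length `l > 0`, and sampling time with `Δt·γ ≤ l`. -/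
theorem aux_supply_monotone
    (γ : ℝ) (hγ : 0 ≤ γ)
    (β : ℝ) (hβ : 0 < β)
    (l : ℝ) (hl : 0 < l)
    (Δt : ℝ) (hΔt : 0 ≤ Δt) (hΔtγ : Δt * γ ≤ l)
    (s : ℝ → ℝ) (hs : Antitone s)
    (hsLip : ∀ x y : ℝ, |s x - s y| ≤ γ * |x - y|)
    (x x' y y' : ℝ) (hx : x ≤ x') (hy : y ≤ y') :
    y - (Δt / β) * s ((x - β * y) / l) ≤ y' - (Δt / β) * s ((x' - β * y') / l) := by
  have hc : 0 ≤ Δt / β := div_nonneg hΔt hβ.le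
  -- step 1: increase x from x to x'
  have hs1 : s ((x' - β * y) / l) ≤ s ((x - β * y) / l) := by
    apply hs
    exact (div_le_div_iff_of_pos_right hl).mpr (by linarith)
  have h1 : y - (Δt / β) * s ((x - β * y) / l) ≤ y - (Δt / β) * s ((x' - β * y) / l) := by
    have := mul_le_mul_of_nonneg_left hs1 hc
    linarith
  -- step 2: increase y from y to y'
  have hlip := hsLip ((x' - β * y') / l) ((x' - β * y) / l)
  have habs : |(x' - β * y') / l - (x' - β * y) / l| = β * (y' - y) / l := by
    rw [div_sub_div_same, abs_div, abs_of_pos hl]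
    congr 1
    rw [show x' - β * y' - (x' - β * y) = -(β * (y' - y)) by ring, abs_neg,
      abs_of_nonneg (by nlinarith)]
  rw [habs] at hlip
  have hkey : s ((x' - β * y') / l) - s ((x' - β * y) / l) ≤ γ * (β * (y' - y) / l) :=
    (abs_le.mp hlip).2
  have h2 : y - (Δt / β) * s ((x' - β * y) / l) ≤ y' - (Δt / β) * s ((x' - β * y') / l) := by
    have := mul_le_mul_of_nonneg_left hkey hc
    have hfield : Δt / β * (γ * (β * (y' - y) / l)) = (Δt * γ / l) * (y' - y) := by
      field_simp
    rw [hfield] at this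
    have hle : (Δt * γ / l) * (y' - y) ≤ 1 * (y' - y) := by
      apply mul_le_mul_of_nonneg_right _ (by linarith)
      rw [div_le_one hl]; linarith
    linarith
  linarith
end

section
/- Let ι be a finite index type of cell labels and κ a finite index type of demand labels. Fix a cell e ∈ ι with upstream cell u ∈ ι and coefficient β_u ≥ 0, a finite nonempty set J ⊆ ι of downstream cells with coefficients β_j > 0 and lengths l_j > 0 for j ∈ J, a length l_e > 0, γ ≥ 0, and Δt ≥ 0 with Δt·γ ≤ l_e and Δt·γ ≤ l_j for all j ∈ J. Let d : ℝ → ℝ be nondecreasing and γ-Lipschitz, let s_j : ℝ → ℝ be nonincreasing and γ-Lipschitz for each j ∈ J, let p : κ → ℝ be nonnegative, let C ⊆ ι be a set of controlled cells with nonnegative weights a_c ≥ 0 and fixed thresholds v_c ∈ ℝ for c ∈ C. Define ρ_e(z) := (z_e − β_u z_u)/l_e and ρ_j(z) := (z_j − β_j z_e)/l_j, and define G : (ι → ℝ) × (κ → ℝ) → ℝ by G(z, w) := max{ z_e − Δt·d(ρ_e(z)), max_{j∈J} ( z_e − (Δt/β_j)·s_j(ρ_j(z)) ) } + Σ_{r∈κ}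 p_r w_r + Σ_{c∈C} a_c · max{0, z_c − v_c}. Then G is monotone: z ≤ z' componentwise and w ≤ w' componentwise imply G(z, w) ≤ G(z', w'). -/
/-- paper Lemma 3, per-cell form: for an uncontrolled cell `e` of
the transformed cell transmission model with controlled merging junctions, the
transformed state update
`G(z, w) = max{ z_e − Δt·d(ρ_e(z)), max_{j∈J} (z_e − (Δt/β_j)·s_j(ρ_j(z))) }
  + Σ_r p_r w_r + Σ_{c∈C} a_c·max{0, z_c − v_c}`
(with `ρ_e(z) = (z_e − β_u z_u)/l_e`, `ρ_j(z) = (z_j − β_j z_e)/l_j`, demand `d`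
nondecreasing and `γ`-Lipschitz, supplies `s_j` nonincreasing and `γ`-Lipschitz,
`p ≥ 0`, controlled-flow weights `a_c ≥ 0`, and `Δt·γ` bounded by all cell
lengths) is monotone in the transformed state `z` and the external demand `w`. -/
theorem tctm_uncontrolled_cell_update_monotone
    (ι κ : Type*) [Fintype ι] [Fintype κ]
    (e u : ι) (βu : ℝ) (hβu : 0 ≤ βu)
    (J : Finset ι) (hJ : J.Nonempty)
    (β : ι → ℝ) (hβ : ∀ j ∈ J, 0 < β j)
    (l : ι → ℝ) (hlJ : ∀ j ∈ J, 0 < l j)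
    (le : ℝ) (hle : 0 < le)
    (γ : ℝ) (hγ : 0 ≤ γ)
    (Δt : ℝ) (hΔt : 0 ≤ Δt) (hΔtle : Δt * γ ≤ le) (hΔtJ : ∀ j ∈ J, Δt * γ ≤ l j)
    (d : ℝ → ℝ) (hd : Monotone d) (hdLip : ∀ x y : ℝ, |d x - d y| ≤ γ * |x - y|)
    (s : ι → ℝ → ℝ) (hs : ∀ j ∈ J, Antitone (s j))
    (hsLip : ∀ j ∈ J, ∀ x y : ℝ, |s j x - s j y| ≤ γ * |x - y|)
    (p : κ → ℝ) (hp : ∀ r, 0 ≤ p r)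
    (C : Finset ι) (a : ι → ℝ) (ha : ∀ c ∈ C, 0 ≤ a c) (v : ι → ℝ)
    (z z' : ι → ℝ) (w w' : κ → ℝ) (hz : ∀ i, z i ≤ z' i) (hw : ∀ r, w r ≤ w' r) :
    max (z e - Δt * d ((z e - βu * z u) / le))
        (J.sup' hJ fun j => z e - (Δt / β j) * s j ((z j - β j * z e) / l j))
      + (∑ r, p r * w r) + ∑ c ∈ C, a c * max 0 (z c - v c)
    ≤ max (z' e - Δt * d ((z' e - βu * z' u) / le))
        (J.sup' hJ fun j => z' e - (Δt / β j) * s j ((z' j - β j * z' e) / l j))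
      + (∑ r, p r * w' r) + ∑ c ∈ C, a c * max 0 (z' c - v c) := by
  have hδe : 0 ≤ z' e - z e := sub_nonneg.2 (hz e)
  -- demand term
  have hdem : z e - Δt * d ((z e - βu * z u) / le)
      ≤ z' e - Δt * d ((z' e - βu * z' u) / le) := by
    set x := (z e - βu * z u) / le with hx
    set x' := (z' e - βu * z' u) / le with hx'
    have key : Δt * (d x' - d x) ≤ z' e - z e := by
      rcases le_or_gt x x' with h | h
      · have h1 : d x' - d x ≤ γ * (x' - x) := by
          calc d x' - d x ≤ |d x' - d x| := le_abs_self _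
            _ ≤ γ * |x' - x| := hdLip x' x
            _ = γ * (x' - x) := by rw [abs_of_nonneg (sub_nonneg.2 h)]
        have h2 : x' - x ≤ (z' e - z e) / le := by
          rw [hx, hx', div_sub_div_same]
          exact (div_le_div_iff_of_pos_right hle).mpr
            (by nlinarith [mul_nonneg hβu (sub_nonneg.2 (hz u))])
        calc Δt * (d x' - d x) ≤ Δt * (γ * (x' - x)) := by
              exact mul_le_mul_of_nonneg_left h1 hΔt
          _ ≤ Δt * (γ * ((z' e - z e) / le)) := by
              have := mul_le_mul_of_nonneg_left h2 hγ
              exact mul_le_mul_of_nonneg_left this hΔt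
          _ = (Δt * γ) * ((z' e - z e) / le) := by ring
          _ ≤ le * ((z' e - z e) / le) := by
              apply mul_le_mul_of_nonneg_right hΔtle
              positivity
          _ = z' e - z e := by field_simp
      · have : d x' ≤ d x := hd h.le
        nlinarith
    linarith
  -- supply terms
  have hsup : ∀ j ∈ J, z e - (Δt / β j) * s j ((z j - β j * z e) / l j)
      ≤ z' e - (Δt / β j) * s j ((z' j - β j * z' e) / l j) := by
    intro j hj
    have hβj := hβ j hj
    have hlj := hlJ j hj
    set x := (z j - β j * z e) / l j with hx
    set x' := (z' j - β j * z' e) / l j with hx'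
    have key : (Δt / β j) * (s j x' - s j x) ≤ z' e - z e := by
      rcases le_or_gt x x' with h | h
      · have : s j x' ≤ s j x := hs j hj h
        have hpos : 0 ≤ Δt / β j := div_nonneg hΔt hβj.le
        nlinarith
      · have h1 : s j x' - s j x ≤ γ * (x - x') := by
          calc s j x' - s j x ≤ |s j x' - s j x| := le_abs_self _
            _ ≤ γ * |x' - x| := hsLip j hj x' x
            _ = γ * (x - x') := by rw [abs_of_neg (sub_neg.2 h), neg_sub]
        have h2 : x - x' ≤ β j * (z' e - z e) / l j := by
          rw [hx, hx', div_sub_div_same]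
          apply (div_le_div_iff_of_pos_right hlj).mpr
          nlinarith [hz j]
        have hpos : 0 ≤ Δt / β j := div_nonneg hΔt hβj.le
        calc (Δt / β j) * (s j x' - s j x) ≤ (Δt / β j) * (γ * (x - x')) :=
              mul_le_mul_of_nonneg_left h1 hpos
          _ ≤ (Δt / β j) * (γ * (β j * (z' e - z e) / l j)) := by
              have := mul_le_mul_of_nonneg_left h2 hγ
              exact mul_le_mul_of_nonneg_left this hpos
          _ = (Δt * γ) * ((z' e - z e) / l j) := by field_simp
          _ ≤ l j * ((z' e - z e) / l j) := by
              apply mul_le_mul_of_nonneg_right (hΔtJ j hj)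
              positivity
          _ = z' e - z e := by field_simp
    linarith
  have hmax : max (z e - Δt * d ((z e - βu * z u) / le))
        (J.sup' hJ fun j => z e - (Δt / β j) * s j ((z j - β j * z e) / l j))
      ≤ max (z' e - Δt * d ((z' e - βu * z' u) / le))
        (J.sup' hJ fun j => z' e - (Δt / β j) * s j ((z' j - β j * z' e) / l j)) := by
    apply max_le_max hdem
    exact Finset.sup'_le _ _ fun j hj => (hsup j hj).trans (Finset.le_sup' (fun j => z' e - (Δt / β j) * s j ((z' j - β j * z' e) / l j)) hj)
  have hw' : (∑ r, p r * w r) ≤ ∑ r, p r * w' r :=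
    Finset.sum_le_sum fun r _ => mul_le_mul_of_nonneg_left (hw r) (hp r)
  have hc : (∑ c ∈ C, a c * max 0 (z c - v c)) ≤ ∑ c ∈ C, a c * max 0 (z' c - v c) :=
    Finset.sum_le_sum fun c hc => mul_le_mul_of_nonneg_left
      (max_le_max le_rfl (by linarith [hz c])) (ha c hc)
  linarith
end

section
/- Fix dimensions n, p, k, a plan horizon Tc ≥ 1, and maps F̄_τ : ℝⁿ × ℝᵖ → ℝⁿ, Ḡ_τ : ℝⁿ × ℝᵖ → ℝᵏ (indexed by times τ) such that for every fixed v ∈ ℝᵖ the maps z ↦ F̄_τ(z, v) and z ↦ Ḡ_τ(z, v) are monotone. Let (z*, v*) be a reference trajectory: z*(τ+1) = F̄_τ(z*(τ), v*(τ)) and Ḡ_τ(z*(τ), v*(τ)) ≤ 0 for all τ. Suppose at time t there is a feasible plan: controls v̂(t), …, v̂(t+Tc−1) and predicted states ẑ(t) = z(t), ẑ(τ+1) = F̄_τ(ẑ(τ), v̂(τ)) with Ḡ_τ(ẑ(τ), v̂(τ)) ≤ 0 for t ≤ τ < t+Tc and the terminal constraint ẑ(t+Tc) ≤ z*(t+Tc).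 Let the realized next state be z(t+1) = f_t(z(t), v̂(t)) for any map f_t with f_t ≤ F̄_t pointwise, and let g_t be any map with g_t ≤ Ḡ_t pointwise. Then: (i) g_t(z(t), v̂(t)) ≤ 0; (ii) z(t+1) ≤ ẑ(t+1); and (iii) the shifted plan (v̂(t+1), …, v̂(t+Tc−1), v*(t+Tc)), with predicted states ž(t+1) = z(t+1) and ž(τ+1) = F̄_τ(ž(τ), ·) under the corresponding controls, is feasible at time t+1: it satisfies Ḡ_τ(ž(τ), ·) ≤ 0 at every step and the terminal constraint ž(t+1+Tc) ≤ z*(t+1+Tc). -/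
/-!
Splice the predicted trajectory ẑ on `[t, t + Tc]` with the reference z* after it, and the plan
controls v̂ on `[t, t + Tc)` with v* after it. The spliced trajectory is a supersolution of the
worst-case closed-loop dynamics that satisfies every constraint: on the horizon this is the
feasibility of the plan, after it the terminal constraint ẑ(t+Tc) ≤ z*(t+Tc) propagates along the
reference by monotonicity. The realized state f(z(t), v̂(t)) ≤ F̄(z(t), v̂(t)) = ẑ(t+1) starts below
it, so by the comparison principle for monotone dynamics the shifted trajectory stays below it and
inherits its constraints and terminal bound.
-/

/-- Time-varying version of `Monotone.seq_le_seq`. -/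
theorem seq_le_seq_of_monotone {σ : Type*} [Preorder σ] {F : ℕ → σ → σ}
    (hF : ∀ τ, Monotone (F τ)) {x y : ℕ → σ} {a : ℕ}
    (hx : ∀ τ, a ≤ τ → x (τ + 1) ≤ F τ (x τ)) (hy : ∀ τ, a ≤ τ → F τ (y τ) ≤ y (τ + 1))
    (ha : x a ≤ y a) {τ : ℕ} (hτ : a ≤ τ) : x τ ≤ y τ := by
  induction τ, hτ using Nat.le_induction with
  | base => exact ha
  | succ τ hτ ih => exact (hx τ hτ).trans ((hF τ ih).trans (hy τ hτ))

/-- The trajectory of the time-varying dynamics `F` that is at `x` up to time `s`. -/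
def flow {σ : Type*} (F : ℕ → σ → σ) (s : ℕ) (x : σ) : ℕ → σ
  | 0 => x
  | τ + 1 => if s ≤ τ then F τ (flow F s x τ) else x

section Flow

variable {σ : Type*} {F : ℕ → σ → σ} {s : ℕ} {x : σ}

theorem flow_of_le {τ : ℕ} (hτ : τ ≤ s) : flow F s x τ = x := by
  cases τ with
  | zero => rfl
  | succ τ => simp [flow, show ¬s ≤ τ by omega]

theorem flow_self : flow F s x s = x := flow_of_le le_rfl

theorem flow_succ {τ : ℕ} (hτ : s ≤ τ) : flow F s x (τ + 1) = F τ (flow F s x τ) := by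
  simp [flow, hτ]

end Flow

def splice {α : Type*} (T : ℕ) (x y : ℕ → α) (τ : ℕ) : α := if τ < T then x τ else y τ

section Splice

variable {α : Type*} {T τ : ℕ} {x y : ℕ → α}

theorem splice_of_lt (h : τ < T) : splice T x y τ = x τ := if_pos h

theorem splice_of_le (h : T ≤ τ) : splice T x y τ = y τ := if_neg (Nat.not_lt.2 h)

theorem splice_succ_le [Preorder α] (hT : x T ≤ y T) (h : T ≤ τ) :
    splice (T + 1) x y τ ≤ y τ := by
  rcases h.eq_or_lt with rfl | h
  · rwa [splice_of_lt (Nat.lt_succ_self _)]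
  · exact (splice_of_le h).le

end Splice

section Splicing

variable {σ U C : Type*} [Preorder σ] [Preorder C] [Zero C]
  {F : ℕ → σ → U → σ} {G : ℕ → σ → U → C}
  {zstar zhat : ℕ → σ} {vstar vhat : ℕ → U} {t T : ℕ}

theorem splice_supersolution (hF : ∀ τ v, Monotone fun z => F τ z v)
    (hzstar : ∀ τ, zstar (τ + 1) = F τ (zstar τ) (vstar τ))
    (hzhat : ∀ τ, t ≤ τ → τ < t + T → zhat (τ + 1) = F τ (zhat τ) (vhat τ))
    (hterm : zhat (t + T) ≤ zstar (t + T)) {τ : ℕ} (hτ : t ≤ τ) :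
    F τ (splice (t + T + 1) zhat zstar τ) (splice (t + T) vhat vstar τ) ≤
      splice (t + T + 1) zhat zstar (τ + 1) := by
  rcases Nat.lt_or_ge τ (t + T) with h | h
  · rw [splice_of_lt (by omega), splice_of_lt h, splice_of_lt (by omega), hzhat τ hτ h]
  · rw [splice_of_le h, splice_of_le (show t + T + 1 ≤ τ + 1 by omega), hzstar]
    exact hF τ _ (splice_succ_le hterm h)

theorem splice_feasible (hG : ∀ τ v, Monotone fun z => G τ z v)
    (hzstar : ∀ τ, G τ (zstar τ) (vstar τ) ≤ 0)
    (hzhat : ∀ τ, t ≤ τ → τ < t + T → G τ (zhat τ) (vhat τ) ≤ 0)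
    (hterm : zhat (t + T) ≤ zstar (t + T)) {τ : ℕ} (hτ : t ≤ τ) :
    G τ (splice (t + T + 1) zhat zstar τ) (splice (t + T) vhat vstar τ) ≤ 0 := by
  rcases Nat.lt_or_ge τ (t + T) with h | h
  · rw [splice_of_lt (by omega), splice_of_lt h]
    exact hzhat τ hτ h
  · rw [splice_of_le h]
    exact (hG τ _ (splice_succ_le hterm h)).trans (hzstar τ)

end Splicing

/-- recursive-feasibility core of paper Proposition 2: for the
monotone worst-case nominal dynamics/constraints `(F̄, Ḡ)`, a reference
trajectory `(z*, v*)`, and a feasible horizon-`Tc` plan `(v̂, ẑ)` at time `t`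
with terminal constraint `ẑ(t+Tc) ≤ z*(t+Tc)`, every dominated realization
`(f, g)` satisfies the constraint at time `t`, the realized next state is
dominated by the predicted one, and the shifted plan (reusing `v̂` and appending
`v*(t+Tc)`) is feasible at time `t+1`. -/
theorem mpc_recursive_feasibility
    (n p k Tc : ℕ) (hTc : 1 ≤ Tc)
    (Fbar : ℕ → (Fin n → ℝ) → (Fin p → ℝ) → Fin n → ℝ)
    (Gbar : ℕ → (Fin n → ℝ) → (Fin p → ℝ) → Fin k → ℝ)
    (hFmono : ∀ τ (v : Fin p → ℝ), Monotone fun z => Fbar τ z v)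
    (hGmono : ∀ τ (v : Fin p → ℝ), Monotone fun z => Gbar τ z v)
    (zstar : ℕ → Fin n → ℝ) (vstar : ℕ → Fin p → ℝ)
    (hzstarRec : ∀ τ, zstar (τ + 1) = Fbar τ (zstar τ) (vstar τ))
    (hzstarFeas : ∀ τ, Gbar τ (zstar τ) (vstar τ) ≤ 0)
    (t : ℕ) (zt : Fin n → ℝ)
    (vhat : ℕ → Fin p → ℝ) (zhat : ℕ → Fin n → ℝ)
    (hinit : zhat t = zt)
    (hpred : ∀ τ, t ≤ τ → τ < t + Tc → zhat (τ + 1) = Fbar τ (zhat τ) (vhat τ))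
    (hplanFeas : ∀ τ, t ≤ τ → τ < t + Tc → Gbar τ (zhat τ) (vhat τ) ≤ 0)
    (hterm : zhat (t + Tc) ≤ zstar (t + Tc))
    (f : (Fin n → ℝ) → (Fin p → ℝ) → Fin n → ℝ)
    (g : (Fin n → ℝ) → (Fin p → ℝ) → Fin k → ℝ)
    (hf : ∀ z v, f z v ≤ Fbar t z v)
    (hg : ∀ z v, g z v ≤ Gbar t z v) :
    -- (i) the realized constraint holds at time t
    g zt (vhat t) ≤ 0 ∧
    -- (ii) the realized next state is dominated by the predicted one
    f zt (vhat t) ≤ zhat (t + 1) ∧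
    -- (iii) the shifted plan (v̂(t+1), …, v̂(t+Tc−1), v*(t+Tc)) is feasible
    -- at time t+1
    (∃ zcheck : ℕ → Fin n → ℝ,
      zcheck (t + 1) = f zt (vhat t) ∧
      (∀ τ, t + 1 ≤ τ → τ < t + 1 + Tc →
        zcheck (τ + 1) =
            Fbar τ (zcheck τ) (if τ < t + Tc then vhat τ else vstar τ) ∧
        Gbar τ (zcheck τ) (if τ < t + Tc then vhat τ else vstar τ) ≤ 0) ∧
      zcheck (t + 1 + Tc) ≤ zstar (t + 1 + Tc)) := by
  have hnext : f zt (vhat t) ≤ zhat (t + 1) := by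
    rw [hpred t le_rfl (by omega), hinit]
    exact hf zt (vhat t)
  have hnow : g zt (vhat t) ≤ 0 :=
    (hg zt (vhat t)).trans (hinit ▸ hplanFeas t le_rfl (by omega))
  set u := splice (t + Tc) vhat vstar
  set r := splice (t + Tc + 1) zhat zstar
  set zcheck := flow (fun τ z => Fbar τ z (u τ)) (t + 1) (f zt (vhat t))
  have hbelow : ∀ τ, t + 1 ≤ τ → zcheck τ ≤ r τ := fun τ =>
    seq_le_seq_of_monotone (fun τ => hFmono τ (u τ)) (fun τ hτ => (flow_succ hτ).le)
      (fun τ hτ => splice_supersolution hFmono hzstarRec hpred hterm (by omega))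
      (by rwa [show zcheck (t + 1) = _ from flow_self, splice_of_lt (by omega)])
  refine ⟨hnow, hnext, zcheck, flow_self, fun τ hτ _ => ⟨flow_succ hτ, ?_⟩, ?_⟩
  · exact (hGmono τ _ (hbelow τ hτ)).trans
      (splice_feasible hGmono hzstarFeas hplanFeas hterm (by omega))
  · exact (hbelow _ (by omega)).trans (splice_of_le (by omega)).le
end

section
/- Fix dimensions n, p, k, a total horizon 𝒯 ∈ ℕ, a plan horizon Tc ≥ 1, a cost vector c ∈ ℝⁿ with c ≥ 0 componentwise, and maps F̄_τ : ℝⁿ × ℝᵖ → ℝⁿ, Ḡ_τ : ℝⁿ × ℝᵖ → ℝᵏ (τ < 𝒯) such that for every fixed v ∈ ℝᵖ the maps z ↦ F̄_τ(z, v) and z ↦ Ḡ_τ(z, v) are monotone. Let (z*, v*) be a reference trajectory with z*(τ+1) = F̄_τ(z*(τ), v*(τ)) and Ḡ_τ(z*(τ), v*(τ)) ≤ 0 for all τ < 𝒯, and let z(0) = z*(0). Suppose the closed loop is generated as follows: at each time t < 𝒯, with horizon H_t := min(Tc, 𝒯 − t), a plan (v̂_t(τ))_{τ=t}^{t+H_t−1}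 with predicted states ẑ_t(t) = z(t), ẑ_t(τ+1) = F̄_τ(ẑ_t(τ), v̂_t(τ)) is chosen that satisfies Ḡ_τ(ẑ_t(τ), v̂_t(τ)) ≤ 0 for all t ≤ τ < t+H_t and the terminal constraint ẑ_t(t+H_t) ≤ z*(t+H_t), and that minimizes Σ_{τ=t+1}^{t+H_t} c·ẑ_t(τ) among all plans satisfying these conditions; the applied control is v̂_t(t) and the realized next state is z(t+1) = f_t(z(t), v̂_t(t)) for some map f_t with f_t ≤ F̄_t pointwise. Then such a plan exists at every time t (the scheme is well-defined whenever the minima are attained), the closed-loop trajectory satisfies g_t(z(t), v̂_t(t)) ≤ 0 for every g_t ≤ Ḡ_t pointwise, and the closed-loop cost satisfies Σ_{t=0}^{𝒯} c·z(t) ≤ Σ_{t=0}^{𝒯} c·z*(t). -/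
/-- A feasible horizon plan at time `t` from state `zt` for the receding horizon
scheme: predicted states `zp` start at `zt`, follow the nominal worst-case
dynamics `F̄` under the controls `v` over the horizon `H = min Tc (T − t)`,
satisfy the nominal constraints `Ḡ ≤ 0` at every step, and satisfy the terminal
constraint `zp(t + H) ≤ z*(t + H)`. -/
def FeasiblePlan {n p k : ℕ} (T Tc : ℕ)
    (Fbar : ℕ → (Fin n → ℝ) → (Fin p → ℝ) → Fin n → ℝ)
    (Gbar : ℕ → (Fin n → ℝ) → (Fin p → ℝ) → Fin k → ℝ)
    (zstar : ℕ → Fin n → ℝ) (t : ℕ) (zt : Fin n → ℝ)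
    (v : ℕ → Fin p → ℝ) (zp : ℕ → Fin n → ℝ) : Prop :=
  zp t = zt ∧
  (∀ τ, t ≤ τ → τ < t + min Tc (T - t) →
    zp (τ + 1) = Fbar τ (zp τ) (v τ) ∧ Gbar τ (zp τ) (v τ) ≤ 0) ∧
  zp (t + min Tc (T - t)) ≤ zstar (t + min Tc (T - t))

/-- Cost of the predicted states of a horizon plan at time `t`:
`Σ_{τ=t+1}^{t+H} c·zp(τ)` with `H = min Tc (T − t)`. -/
def planCost {n : ℕ} (T Tc : ℕ) (c : Fin n → ℝ) (t : ℕ)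
    (zp : ℕ → Fin n → ℝ) : ℝ :=
  ∑ τ ∈ Finset.Icc (t + 1) (t + min Tc (T - t)), ∑ i, c i * zp τ i

/-- Splitting the first term off a `range` sum, `Ioc` form. -/
lemma sum_range_succ_eq_add_Ioc (f : ℕ → ℝ) (n : ℕ) :
    ∑ i ∈ Finset.range (n + 1), f i = f 0 + ∑ i ∈ Finset.Ioc 0 n, f i := by
  induction n with
  | zero => simp
  | succ m ih =>
    rw [Finset.sum_range_succ, ih, Finset.sum_Ioc_succ_top (Nat.zero_le _)]
    ring

/-- `Icc (t+1) m = Ioc t m` for naturals. -/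
lemma Icc_succ_left_eq_Ioc (t m : ℕ) : Finset.Icc (t + 1) m = Finset.Ioc t m := by
  ext x; simp only [Finset.mem_Icc, Finset.mem_Ioc]; omega

/-- Rollout of controlled dynamics `Fb` starting at time `t0` from state `x0`. -/
def roll {n p : ℕ} (Fb : ℕ → (Fin n → ℝ) → (Fin p → ℝ) → Fin n → ℝ)
    (v : ℕ → Fin p → ℝ) (t0 : ℕ) (x0 : Fin n → ℝ) : ℕ → Fin n → ℝ :=
  fun m => Nat.rec x0 (fun s xs => Fb (t0 + s) xs (v (t0 + s))) (m - t0)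

lemma roll_start {n p : ℕ} (Fb : ℕ → (Fin n → ℝ) → (Fin p → ℝ) → Fin n → ℝ)
    (v : ℕ → Fin p → ℝ) (t0 : ℕ) (x0 : Fin n → ℝ) : roll Fb v t0 x0 t0 = x0 := by
  simp [roll]

lemma roll_succ {n p : ℕ} (Fb : ℕ → (Fin n → ℝ) → (Fin p → ℝ) → Fin n → ℝ)
    (v : ℕ → Fin p → ℝ) (t0 : ℕ) (x0 : Fin n → ℝ) {m : ℕ} (h : t0 ≤ m) :
    roll Fb v t0 x0 (m + 1) = Fb m (roll Fb v t0 x0 m) (v m) := by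
  obtain ⟨s, rfl⟩ := Nat.exists_eq_add_of_le h
  have h1 : t0 + s + 1 - t0 = s + 1 := by omega
  have h2 : t0 + s - t0 = s := by omega
  simp only [roll, h1, h2]

/-- monotone-system form of paper Proposition 2: the receding
horizon policy that at each time `t < T` selects a cost-minimizing feasible
horizon-`min Tc (T − t)` plan for the worst-case nominal dynamics `(F̄, Ḡ)` with
terminal constraint dominated by the reference trajectory `z*`, and applies its
first control to the realized dynamics `f ≤ F̄`, is well-defined (a feasible
plan exists at every time), robustly feasible (every `g ≤ Ḡ` is satisfied along
the closed loop), and achieves closed-loop cost at most the reference cost. -/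
theorem mpc_well_defined_feasible_improving
    (n p k T Tc : ℕ) (hTc : 1 ≤ Tc)
    (c : Fin n → ℝ) (hc : 0 ≤ c)
    (Fbar : ℕ → (Fin n → ℝ) → (Fin p → ℝ) → Fin n → ℝ)
    (Gbar : ℕ → (Fin n → ℝ) → (Fin p → ℝ) → Fin k → ℝ)
    (hFmono : ∀ τ < T, ∀ v : Fin p → ℝ, Monotone fun z => Fbar τ z v)
    (hGmono : ∀ τ < T, ∀ v : Fin p → ℝ, Monotone fun z => Gbar τ z v)
    (zstar : ℕ → Fin n → ℝ) (vstar : ℕ → Fin p → ℝ)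
    (hzstarRec : ∀ τ < T, zstar (τ + 1) = Fbar τ (zstar τ) (vstar τ))
    (hzstarFeas : ∀ τ < T, Gbar τ (zstar τ) (vstar τ) ≤ 0)
    (z : ℕ → Fin n → ℝ) (hz0 : z 0 = zstar 0)
    (V : ℕ → ℕ → Fin p → ℝ) (Z : ℕ → ℕ → Fin n → ℝ)
    -- at each time, whenever some feasible plan exists, the selected plan
    -- `(V t, Z t)` is feasible and minimizes the predicted cost
    (hplan : ∀ t < T,
      (∃ v' zp', FeasiblePlan T Tc Fbar Gbar zstar t (z t) v' zp') →
        FeasiblePlan T Tc Fbar Gbar zstar t (z t) (V t) (Z t) ∧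
        ∀ v' zp', FeasiblePlan T Tc Fbar Gbar zstar t (z t) v' zp' →
          planCost T Tc c t (Z t) ≤ planCost T Tc c t zp')
    (f : ℕ → (Fin n → ℝ) → (Fin p → ℝ) → Fin n → ℝ)
    (hf : ∀ t < T, ∀ zz vv, f t zz vv ≤ Fbar t zz vv)
    (hstep : ∀ t < T, z (t + 1) = f t (z t) (V t t)) :
    -- the scheme is well-defined: a feasible plan exists at every time
    (∀ t < T, ∃ v' zp', FeasiblePlan T Tc Fbar Gbar zstar t (z t) v' zp') ∧
    -- the closed loop satisfies every dominated constraint realization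
    (∀ t < T, ∀ g : (Fin n → ℝ) → (Fin p → ℝ) → Fin k → ℝ,
      (∀ zz vv, g zz vv ≤ Gbar t zz vv) → g (z t) (V t t) ≤ 0) ∧
    -- the closed-loop cost is at most the worst-case reference cost
    (∑ t ∈ Finset.range (T + 1), ∑ i, c i * z t i)
      ≤ ∑ t ∈ Finset.range (T + 1), ∑ i, c i * zstar t i := by
  classical
  have hc' : ∀ i, 0 ≤ c i := fun i => hc i
  set D : (Fin n → ℝ) → ℝ := fun x => ∑ i, c i * x i with hDdef
  have hD : ∀ {x y : Fin n → ℝ}, x ≤ y → D x ≤ D y := by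
    intro x y h
    exact Finset.sum_le_sum fun i _ => mul_le_mul_of_nonneg_left (h i) (hc' i)
  have hplanCost : ∀ (t : ℕ) (zp : ℕ → Fin n → ℝ),
      planCost T Tc c t zp = ∑ τ ∈ Finset.Ioc t (t + min Tc (T - t)), D (zp τ) := by
    intro t zp
    rw [planCost, Icc_succ_left_eq_Ioc]
  -- the shift lemma: from a feasible plan at time t and a dominated successor state,
  -- build a feasible plan at time t+1 with controlled cost
  have shift : ∀ t, t + 1 < T → ∀ (v0 : ℕ → Fin p → ℝ) (zp0 : ℕ → Fin n → ℝ),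
      FeasiblePlan T Tc Fbar Gbar zstar t (z t) v0 zp0 → ∀ w, w ≤ zp0 (t + 1) →
      ∃ v' zp', FeasiblePlan T Tc Fbar Gbar zstar (t + 1) w v' zp' ∧
        planCost T Tc c (t + 1) zp' ≤
          (∑ τ ∈ Finset.Ioc (t + 1) (t + min Tc (T - t)), D (zp0 τ)) +
          ∑ τ ∈ Finset.Ioc (t + min Tc (T - t)) (t + 1 + min Tc (T - (t + 1))),
            D (zstar τ) := by
    intro t ht v0 zp0 hfp w hw
    obtain ⟨hstart, hdyn, hterm⟩ := hfp
    set Et := t + min Tc (T - t) with hEtd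
    set E' := t + 1 + min Tc (T - (t + 1)) with hE'd
    have h1 : t + 1 ≤ Et := by omega
    have h2 : Et ≤ T := by omega
    have h3 : Et ≤ E' := by omega
    have h4 : E' ≤ Et + 1 := by omega
    have h5 : E' ≤ T := by omega
    have h6 : Et < T ↔ E' = Et + 1 := by omega
    set v' : ℕ → Fin p → ℝ := fun τ => if τ < Et then v0 τ else vstar τ with hv'd
    set zp' := roll Fbar v' (t + 1) w with hzp'd
    have hzp'0 : zp' (t + 1) = w := roll_start _ _ _ _
    have hzp's : ∀ m, t + 1 ≤ m → zp' (m + 1) = Fbar m (zp' m) (v' m) :=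
      fun m hm => roll_succ _ _ _ _ hm
    have hcomp : ∀ τ, t + 1 ≤ τ → τ ≤ Et → zp' τ ≤ zp0 τ := by
      intro τ h1τ
      induction τ, h1τ using Nat.le_induction with
      | base => intro _; rw [hzp'0]; exact hw
      | succ m hm ih =>
        intro h2m
        have hm1 : m < Et := by omega
        have hmT : m < T := by omega
        have hvm : v' m = v0 m := if_pos hm1
        rw [hzp's m hm, (hdyn m (by omega) hm1).1, hvm]
        exact hFmono m hmT (v0 m) (ih (by omega))
    have hext : Et < T → zp' (Et + 1) ≤ zstar (Et + 1) ∧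
        Gbar Et (zp' Et) (vstar Et) ≤ 0 := by
      intro hEtT
      have hEtle : zp' Et ≤ zstar Et := le_trans (hcomp Et h1 le_rfl) hterm
      have hvEt : v' Et = vstar Et := if_neg (lt_irrefl Et)
      constructor
      · rw [hzp's Et (by omega), hvEt, hzstarRec Et hEtT]
        exact hFmono Et hEtT (vstar Et) hEtle
      · exact le_trans (hGmono Et hEtT (vstar Et) hEtle) (hzstarFeas Et hEtT)
    refine ⟨v', zp', ⟨hzp'0, ?_, ?_⟩, ?_⟩
    · -- dynamics and constraints over the new horizon
      intro τ h1τ h2τ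
      rw [← hE'd] at h2τ
      refine ⟨hzp's τ h1τ, ?_⟩
      by_cases hτEt : τ < Et
      · have hvτ : v' τ = v0 τ := if_pos hτEt
        rw [hvτ]
        exact le_trans (hGmono τ (by omega) (v0 τ) (hcomp τ h1τ (le_of_lt hτEt)))
          ((hdyn τ (by omega) hτEt).2)
      · have hτ : τ = Et := by omega
        have hEtT : Et < T := by omega
        have hvτ : v' τ = vstar τ := if_neg (by omega)
        rw [hvτ, hτ]
        exact (hext hEtT).2
    · -- terminal constraint
      rw [← hE'd]
      by_cases hB : Et < T
      · rw [h6.mp hB]; exact (hext hB).1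
      · have hAA : E' = Et := by omega
        rw [hAA]
        exact le_trans (hcomp Et h1 le_rfl) hterm
    · -- cost bound
      rw [hplanCost, ← hE'd]
      rw [← Finset.sum_Ioc_consecutive (fun τ => D (zp' τ)) h1 h3]
      refine add_le_add ?_ ?_
      · refine Finset.sum_le_sum fun τ hτ => ?_
        rw [Finset.mem_Ioc] at hτ
        exact hD (hcomp τ (by omega) hτ.2)
      · refine Finset.sum_le_sum fun τ hτ => ?_
        rw [Finset.mem_Ioc] at hτ
        have hEq : τ = Et + 1 := by omega
        have hB : Et < T := h6.mpr (by omega)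
        rw [hEq]
        exact hD (hext hB).1
  -- the reference plan at time 0
  have hrefplan : 0 < T →
      FeasiblePlan T Tc Fbar Gbar zstar 0 (z 0) vstar (roll Fbar vstar 0 (z 0)) ∧
      planCost T Tc c 0 (roll Fbar vstar 0 (z 0)) =
        ∑ τ ∈ Finset.Ioc 0 (min Tc T), D (zstar τ) := by
    intro hT0
    set zr := roll Fbar vstar 0 (z 0) with hzrd
    have hzr0 : zr 0 = z 0 := roll_start _ _ _ _
    have hzrs : ∀ m, zr (m + 1) = Fbar m (zr m) (vstar m) :=
      fun m => roll_succ _ _ _ _ (Nat.zero_le m)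
    have heq : ∀ τ, τ ≤ min Tc T → zr τ = zstar τ := by
      intro τ
      induction τ with
      | zero => intro _; rw [hzr0, hz0]
      | succ m ih =>
        intro hm
        have hmT : m < T := by omega
        rw [hzrs m, ih (by omega), hzstarRec m hmT]
    have hb : 0 + min Tc (T - 0) = min Tc T := by omega
    constructor
    · refine ⟨hzr0, ?_, ?_⟩
      · intro τ h0τ hτ
        have hτT : τ < T := by omega
        refine ⟨hzrs τ, ?_⟩
        rw [heq τ (by omega)]
        exact hzstarFeas τ hτT
      · rw [hb, heq (min Tc T) le_rfl]
    · rw [hplanCost, hb]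
      exact Finset.sum_congr rfl fun τ hτ => by
        rw [Finset.mem_Ioc] at hτ
        rw [heq τ hτ.2]
  -- well-definedness
  have Feas : ∀ t, t < T →
      ∃ v' zp', FeasiblePlan T Tc Fbar Gbar zstar t (z t) v' zp' := by
    intro t
    induction t with
    | zero => intro h; exact ⟨vstar, _, (hrefplan h).1⟩
    | succ m ih =>
      intro h
      have hm : m < T := by omega
      obtain ⟨hZfeas, _⟩ := hplan m hm (ih hm)
      have hz1 : z (m + 1) ≤ Z m (m + 1) := by
        rw [hstep m hm, (hZfeas.2.1 m le_rfl (by omega)).1, hZfeas.1]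
        exact hf m hm (z m) (V m m)
      obtain ⟨v', zp', hfeas, _⟩ := shift m h (V m) (Z m) hZfeas (z (m + 1)) hz1
      exact ⟨v', zp', hfeas⟩
  refine ⟨Feas, ?_, ?_⟩
  · -- robust constraint satisfaction
    intro t ht g hg
    obtain ⟨hZfeas, _⟩ := hplan t ht (Feas t ht)
    have hcon := (hZfeas.2.1 t le_rfl (by omega)).2
    rw [hZfeas.1] at hcon
    exact le_trans (hg (z t) (V t t)) hcon
  · -- cost bound
    set W : ℕ → ℝ := fun t => (∑ s ∈ Finset.range (t + 1), D (z s)) +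
      planCost T Tc c t (Z t) +
      ∑ τ ∈ Finset.Ioc (t + min Tc (T - t)) T, D (zstar τ) with hWd
    have hWstep : ∀ t, t < T → W (t + 1) ≤ W t := by
      intro t ht
      obtain ⟨hZfeas, hZopt⟩ := hplan t ht (Feas t ht)
      have hz1 : z (t + 1) ≤ Z t (t + 1) := by
        rw [hstep t ht, (hZfeas.2.1 t le_rfl (by omega)).1, hZfeas.1]
        exact hf t ht (z t) (V t t)
      have hz1D : D (z (t + 1)) ≤ D (Z t (t + 1)) := hD hz1
      simp only [hWd]
      rw [Finset.sum_range_succ, hplanCost, hplanCost]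
      by_cases hend : t + 1 = T
      · have hEt : t + min Tc (T - t) = t + 1 := by omega
        have hE' : t + 1 + min Tc (T - (t + 1)) = t + 1 := by omega
        rw [hEt, hE']
        have e1 : Finset.Ioc (t + 1) (t + 1) = (∅ : Finset ℕ) := Finset.Ioc_self _
        have e2 : Finset.Ioc t (t + 1) = {t + 1} := Nat.Ioc_succ_singleton t
        rw [e1, e2]
        simp only [Finset.sum_empty, Finset.sum_singleton]
        linarith
      · have ht1 : t + 1 < T := by omega
        obtain ⟨v', zp', hfeas', hcost'⟩ := shift t ht1 (V t) (Z t) hZfeas (z (t + 1)) hz1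
        have hopt := (hplan (t + 1) ht1 ⟨v', zp', hfeas'⟩).2 v' zp' hfeas'
        rw [hplanCost, hplanCost] at hopt
        have hJ : (∑ τ ∈ Finset.Ioc (t + 1) (t + 1 + min Tc (T - (t + 1))),
              D (Z (t + 1) τ)) ≤
            (∑ τ ∈ Finset.Ioc (t + 1) (t + min Tc (T - t)), D (Z t τ)) +
            ∑ τ ∈ Finset.Ioc (t + min Tc (T - t)) (t + 1 + min Tc (T - (t + 1))),
              D (zstar τ) :=
          le_trans hopt (by rw [← hplanCost]; exact hcost')
        have hsplit1 : (∑ τ ∈ Finset.Ioc t (t + 1), D (Z t τ)) +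
            ∑ τ ∈ Finset.Ioc (t + 1) (t + min Tc (T - t)), D (Z t τ) =
            ∑ τ ∈ Finset.Ioc t (t + min Tc (T - t)), D (Z t τ) :=
          Finset.sum_Ioc_consecutive _ (by omega) (by omega)
        have hsplit2 : (∑ τ ∈ Finset.Ioc (t + min Tc (T - t))
              (t + 1 + min Tc (T - (t + 1))), D (zstar τ)) +
            ∑ τ ∈ Finset.Ioc (t + 1 + min Tc (T - (t + 1))) T, D (zstar τ) =
            ∑ τ ∈ Finset.Ioc (t + min Tc (T - t)) T, D (zstar τ) :=
          Finset.sum_Ioc_consecutive _ (by omega) (by omega)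
        have hsing : (∑ τ ∈ Finset.Ioc t (t + 1), D (Z t τ)) = D (Z t (t + 1)) := by
          rw [Nat.Ioc_succ_singleton, Finset.sum_singleton]
        linarith
    have hWmono : ∀ t, t ≤ T → W t ≤ W 0 := by
      intro t
      induction t with
      | zero => intro _; exact le_rfl
      | succ m ih =>
        intro h
        exact le_trans (hWstep m (by omega)) (ih (by omega))
    show (∑ t ∈ Finset.range (T + 1), D (z t)) ≤ ∑ t ∈ Finset.range (T + 1), D (zstar t)
    rcases Nat.eq_zero_or_pos T with hT0 | hT0
    · subst hT0
      simp [hz0]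
    · have hWT : W T = ∑ t ∈ Finset.range (T + 1), D (z t) := by
        simp only [hWd]
        rw [hplanCost]
        have h1 : T + min Tc (T - T) = T := by omega
        rw [h1]
        simp [Finset.Ioc_self]
      have hW0 : W 0 ≤ ∑ t ∈ Finset.range (T + 1), D (zstar t) := by
        obtain ⟨hrf, hrc⟩ := hrefplan hT0
        have hopt0 := (hplan 0 hT0 ⟨vstar, _, hrf⟩).2 vstar _ hrf
        rw [hrc] at hopt0
        simp only [hWd]
        rw [Finset.sum_range_one]
        have e1 : 0 + min Tc (T - 0) = min Tc T := by omega
        rw [e1]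
        have hsplit : (∑ τ ∈ Finset.Ioc 0 (min Tc T), D (zstar τ)) +
            ∑ τ ∈ Finset.Ioc (min Tc T) T, D (zstar τ) =
            ∑ τ ∈ Finset.Ioc 0 T, D (zstar τ) :=
          Finset.sum_Ioc_consecutive _ (Nat.zero_le _) (min_le_right _ _)
        rw [sum_range_succ_eq_add_Ioc (fun t => D (zstar t)) T, hz0]
        linarith
      calc (∑ t ∈ Finset.range (T + 1), D (z t)) = W T := hWT.symm
        _ ≤ W 0 := hWmono T le_rfl
        _ ≤ _ := hW0
end

section
/- Let A be an n×n real matrix with nonnegative entries such that every column sum is at most one (Σ_i A_{i,e} ≤ 1 for every column index e), and suppose that for every index j there exists a finite sequence of indices j = e_0, e_1, …, e_r with A_{e_{m+1}, e_m} > 0 for every m < r and with Σ_i A_{i, e_r} < 1. Then the spectral radius of A is strictly less than 1; equivalently, every complex eigenvalue of A has modulus strictly less than 1. -/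
/-!
Let `c_k = 1 ᵥ* A ^ k` be the row of column sums of `A ^ k`. As `A ≥ 0` and `c_1 ≤ 1`, the
identities `c_{k+1} = c_k ᵥ* A = c_1 ᵥ* A ^ k` show that `c_k ≤ 1` and that `c_k` is antitone,
and that `c_k i < 1` with `A i j > 0` gives `c_{k+1} j < 1`. Walking the hypothesised paths
backwards, `c_N < 1` in every coordinate for some `N`. For an eigenvector `v` of `μ`, the
triangle inequality gives `|μ|^N |v| ≤ A ^ N |v|`, and summing the coordinates
`|μ|^N ∑ |v_j| ≤ ∑ c_N j |v_j| < ∑ |v_j|`, so `|μ| < 1`. The spectrum is finite, so its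
supremum is below one as well.
-/

open Matrix Filter

namespace Matrix

lemma one_vecMul_apply {m n α : Type*} [Fintype m] [NonAssocSemiring α] (A : Matrix m n α)
    (j : n) : (1 ᵥ* A) j = ∑ i, A i j := by
  simp [vecMul, dotProduct]

section Order

variable {m n : Type*} [Fintype m] {A : Matrix m n ℝ} {u v : m → ℝ} {j : n}

lemma vecMul_apply_le_vecMul_apply (huv : u ≤ v) (hA : ∀ i, 0 ≤ A i j) :
    (u ᵥ* A) j ≤ (v ᵥ* A) j :=
  Finset.sum_le_sum fun i _ => mul_le_mul_of_nonneg_right (huv i) (hA i)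

lemma vecMul_apply_lt_vecMul_apply {i : m} (huv : u ≤ v) (hA : ∀ i, 0 ≤ A i j)
    (hi : u i < v i) (hpos : 0 < A i j) : (u ᵥ* A) j < (v ᵥ* A) j :=
  Finset.sum_lt_sum (fun k _ => mul_le_mul_of_nonneg_right (huv k) (hA k))
    ⟨i, Finset.mem_univ i, mul_lt_mul_of_pos_right hi hpos⟩

end Order

section Substochastic

variable {ι : Type*} [Fintype ι] [DecidableEq ι] {A : Matrix ι ι ℝ}

lemma one_vecMul_pow_le_one (hA : ∀ i j, 0 ≤ A i j) (hcol : 1 ᵥ* A ≤ 1) (k : ℕ) :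
    1 ᵥ* A ^ k ≤ 1 := by
  induction k with
  | zero => simp
  | succ k ih =>
    intro j
    rw [pow_succ, ← vecMul_vecMul]
    exact (vecMul_apply_le_vecMul_apply ih fun i => hA i j).trans (hcol j)

lemma antitone_one_vecMul_pow (hA : ∀ i j, 0 ≤ A i j) (hcol : 1 ᵥ* A ≤ 1) :
    Antitone fun k => 1 ᵥ* A ^ k := by
  refine antitone_nat_of_succ_le fun k j => ?_
  rw [pow_succ', ← vecMul_vecMul]
  exact vecMul_apply_le_vecMul_apply hcol fun i => pow_apply_nonneg hA k i j

lemma one_vecMul_pow_succ_apply_lt_one (hA : ∀ i j, 0 ≤ A i j) (hcol : 1 ᵥ* A ≤ 1) {k : ℕ}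
    {i j : ι} (hpos : 0 < A i j) (hlt : (1 ᵥ* A ^ k) i < 1) : (1 ᵥ* A ^ (k + 1)) j < 1 := by
  rw [pow_succ, ← vecMul_vecMul]
  exact (vecMul_apply_lt_vecMul_apply (one_vecMul_pow_le_one hA hcol k) (fun i => hA i j)
    hlt hpos).trans_le (hcol j)

lemma one_vecMul_pow_apply_lt_one_of_path (hA : ∀ i j, 0 ≤ A i j) (hcol : 1 ᵥ* A ≤ 1)
    {r : ℕ} {e : ℕ → ι} (hpath : ∀ m < r, 0 < A (e (m + 1)) (e m))
    (hend : (1 ᵥ* A) (e r) < 1) : (1 ᵥ* A ^ (r + 1)) (e 0) < 1 := by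
  induction r generalizing e with
  | zero => simpa using hend
  | succ r ih =>
    have htail : (1 ᵥ* A ^ (r + 1)) (e 1) < 1 :=
      ih (e := fun m => e (m + 1)) (fun m hm => hpath (m + 1) (by omega)) hend
    exact one_vecMul_pow_succ_apply_lt_one hA hcol (hpath 0 r.succ_pos) htail

lemma exists_forall_one_vecMul_pow_apply_lt_one (hA : ∀ i j, 0 ≤ A i j) (hcol : 1 ᵥ* A ≤ 1)
    (h : ∀ j, ∃ k, (1 ᵥ* A ^ k) j < 1) : ∃ N, ∀ j, (1 ᵥ* A ^ N) j < 1 := by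
  have hev : ∀ j, ∀ᶠ N in atTop, (1 ᵥ* A ^ N) j < 1 := fun j =>
    let ⟨k, hk⟩ := h j
    eventually_atTop.2 ⟨k, fun _ hN => (antitone_one_vecMul_pow hA hcol hN j).trans_lt hk⟩
  exact (eventually_all.2 hev).exists

end Substochastic

lemma norm_lt_of_hasEigenvalue_of_sum_norm_col_lt {ι 𝕜 : Type*} [Fintype ι] [DecidableEq ι]
    [NormedField 𝕜] {M : Matrix ι ι 𝕜} {c : ℝ} (hM : ∀ j, ∑ i, ‖M i j‖ < c) {μ : 𝕜}
    (hμ : Module.End.HasEigenvalue (toLin' M) μ) : ‖μ‖ < c := by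
  obtain ⟨v, hv⟩ := hμ.exists_hasEigenvector
  obtain ⟨j₀, hj₀⟩ := Function.ne_iff.mp hv.2
  have hMv : M *ᵥ v = μ • v := by simpa using hv.apply_eq_smul
  have hrow (i : ι) : ‖μ‖ * ‖v i‖ ≤ ∑ j, ‖M i j‖ * ‖v j‖ :=
    calc ‖μ‖ * ‖v i‖ = ‖(M *ᵥ v) i‖ := by rw [hMv, Pi.smul_apply, smul_eq_mul, norm_mul]
      _ ≤ ∑ j, ‖M i j * v j‖ := norm_sum_le _ _
      _ = ∑ j, ‖M i j‖ * ‖v j‖ := by simp only [norm_mul]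
  have hsum : ‖μ‖ * ∑ j, ‖v j‖ < c * ∑ j, ‖v j‖ :=
    calc ‖μ‖ * ∑ j, ‖v j‖ ≤ ∑ i, ∑ j, ‖M i j‖ * ‖v j‖ := by
          rw [Finset.mul_sum]; exact Finset.sum_le_sum fun i _ => hrow i
      _ = ∑ j, (∑ i, ‖M i j‖) * ‖v j‖ := by
          rw [Finset.sum_comm]; simp only [Finset.sum_mul]
      _ < ∑ j, c * ‖v j‖ :=
          Finset.sum_lt_sum (fun j _ => mul_le_mul_of_nonneg_right (hM j).le (norm_nonneg _))
            ⟨j₀, Finset.mem_univ _, mul_lt_mul_of_pos_right (hM j₀) (norm_pos_iff.2 hj₀)⟩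
      _ = c * ∑ j, ‖v j‖ := Finset.mul_sum _ _ _ |>.symm
  exact lt_of_mul_lt_mul_right hsum (Finset.sum_nonneg fun j _ => norm_nonneg _)

lemma norm_lt_one_of_hasEigenvalue_map_ofReal {ι : Type*} [Fintype ι] [DecidableEq ι]
    {A : Matrix ι ι ℝ} (hA : ∀ i j, 0 ≤ A i j) {N : ℕ} (hN : ∀ j, (1 ᵥ* A ^ N) j < 1) {μ : ℂ}
    (hμ : Module.End.HasEigenvalue (toLin' (A.map Complex.ofReal)) μ) : ‖μ‖ < 1 := by
  have hμN : Module.End.HasEigenvalue (toLin' ((A ^ N).map Complex.ofReal)) (μ ^ N) := by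
    rw [show (A ^ N).map Complex.ofReal = A.map Complex.ofReal ^ N from
      Matrix.map_pow A Complex.ofRealHom N, toLin'_pow]
    exact hμ.pow N
  have hcolN (j : ι) : ∑ i, ‖(A ^ N).map Complex.ofReal i j‖ < 1 := by
    simp only [map_apply, Complex.norm_real, Real.norm_of_nonneg (pow_apply_nonneg hA N _ _)]
    exact one_vecMul_apply (A ^ N) j ▸ hN j
  have hμN_lt : ‖μ ^ N‖ < 1 := norm_lt_of_hasEigenvalue_of_sum_norm_col_lt hcolN hμN
  exact lt_of_pow_lt_pow_left₀ N zero_le_one (by rwa [one_pow, ← norm_pow])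

end Matrix

open scoped NNReal

lemma spectralRadius_lt_of_forall_lt_of_finite {𝕜 A : Type*} [NormedField 𝕜] [Ring A]
    [Algebra 𝕜 A] {a : A} (ha : (spectrum 𝕜 a).Finite) {r : ℝ≥0} (hr : 0 < r)
    (h : ∀ k ∈ spectrum 𝕜 a, ‖k‖₊ < r) : spectralRadius 𝕜 a < r := by
  rw [spectralRadius, ← ha.coe_toFinset]
  simp_rw [Finset.mem_coe, ← Finset.sup_eq_iSup]
  exact (Finset.sup_lt_iff (ENNReal.coe_pos.2 hr)).2 fun k hk =>
    ENNReal.coe_lt_coe.2 (h k (ha.mem_toFinset.1 hk))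

lemma Matrix.spectralRadius_lt_of_forall_hasEigenvalue {ι 𝕜 : Type*} [Fintype ι]
    [DecidableEq ι] [NormedField 𝕜] {M : Matrix ι ι 𝕜} {r : ℝ≥0} (hr : 0 < r)
    (h : ∀ μ, Module.End.HasEigenvalue (toLin' M) μ → ‖μ‖₊ < r) : spectralRadius 𝕜 M < r :=
  spectralRadius_lt_of_forall_lt_of_finite M.finite_spectrum hr fun μ hμ =>
    h μ (Module.End.hasEigenvalue_iff_mem_spectrum.2 (by rwa [spectrum_toLin']))

/-- paper Assumption 1 ⇒ substochastic routing matrix is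
Schur stable: a nonnegative matrix whose column sums are at most one, and such
that from every index there is a path (through strictly positive entries) to a
column with sum strictly less than one, has spectral radius strictly less than
one; equivalently, every complex eigenvalue has modulus strictly less than
one. -/
theorem routing_matrix_spectral_radius_lt_one
    (n : ℕ) (A : Matrix (Fin n) (Fin n) ℝ)
    (hA : ∀ i j, 0 ≤ A i j)
    (hcol : ∀ e, ∑ i, A i e ≤ 1)
    (hreach : ∀ j : Fin n, ∃ (r : ℕ) (e : ℕ → Fin n),
      e 0 = j ∧ (∀ m < r, 0 < A (e (m + 1)) (e m)) ∧ ∑ i, A i (e r) < 1) :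
    spectralRadius ℂ (A.map Complex.ofReal) < 1 ∧
    ∀ μ : ℂ, Module.End.HasEigenvalue
        (Matrix.toLin' (A.map Complex.ofReal)) μ → ‖μ‖ < 1 := by
  have hcol' : 1 ᵥ* A ≤ 1 := fun j => (one_vecMul_apply A j).trans_le (hcol j)
  obtain ⟨N, hN⟩ := exists_forall_one_vecMul_pow_apply_lt_one hA hcol' fun j => by
    obtain ⟨r, e, rfl, hpath, hend⟩ := hreach j
    exact ⟨r + 1, one_vecMul_pow_apply_lt_one_of_path hA hcol' hpath
      ((one_vecMul_apply A _).trans_lt hend)⟩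
  have heig (μ : ℂ) (hμ : Module.End.HasEigenvalue (toLin' (A.map Complex.ofReal)) μ) :
      ‖μ‖ < 1 :=
    norm_lt_one_of_hasEigenvalue_map_ofReal hA hN hμ
  exact ⟨spectralRadius_lt_of_forall_hasEigenvalue one_pos fun μ hμ => mod_cast heig μ hμ, heig⟩
end

section
/- Let ρ̄ ≥ 0, let 0 ≤ ρ ≤ ρ̄, let l > 0, γ ≥ 0, and Δt ≥ 0 with Δt·γ ≤ l. Let d : ℝ → ℝ be γ-Lipschitz with d(0) = 0 and let s : ℝ → ℝ be γ-Lipschitz with s(ρ̄) = 0. Let φ and I be real numbers with 0 ≤ φ ≤ d(ρ) and 0 ≤ I ≤ s(ρ). Then 0 ≤ ρ + (Δt/l)·(I − φ) ≤ ρ̄. -/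
/-- per-cell invariance of the cell transmission model: if the
outflow `φ` is bounded by the demand `d(ρ)` (with `d` `γ`-Lipschitz, `d 0 = 0`),
the total inflow `I` is bounded by the supply `s(ρ)` (with `s` `γ`-Lipschitz,
`s ρ̄ = 0`), and the sampling time satisfies `Δt·γ ≤ l`, then the density update
`ρ⁺ = ρ + (Δt/l)·(I − φ)` stays in the interval `[0, ρ̄]`. -/
theorem density_update_invariant
    (ρbar : ℝ) (hρbar : 0 ≤ ρbar)
    (ρ : ℝ) (hρ0 : 0 ≤ ρ) (hρ1 : ρ ≤ ρbar)
    (l : ℝ) (hl : 0 < l)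
    (γ : ℝ) (hγ : 0 ≤ γ)
    (Δt : ℝ) (hΔt : 0 ≤ Δt) (hΔtγ : Δt * γ ≤ l)
    (d : ℝ → ℝ) (hdLip : ∀ x y : ℝ, |d x - d y| ≤ γ * |x - y|) (hd0 : d 0 = 0)
    (s : ℝ → ℝ) (hsLip : ∀ x y : ℝ, |s x - s y| ≤ γ * |x - y|) (hsbar : s ρbar = 0)
    (φ I : ℝ) (hφ0 : 0 ≤ φ) (hφd : φ ≤ d ρ) (hI0 : 0 ≤ I) (hIs : I ≤ s ρ) :
    0 ≤ ρ + (Δt / l) * (I - φ) ∧ ρ + (Δt / l) * (I - φ) ≤ ρbar := by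
  have hd : d ρ ≤ γ * ρ := by
    have := hdLip ρ 0
    rw [hd0, sub_zero, sub_zero, abs_of_nonneg hρ0] at this
    exact (abs_le.mp this).2
  have hs : s ρ ≤ γ * (ρbar - ρ) := by
    have := hsLip ρ ρbar
    rw [hsbar, sub_zero, abs_sub_comm ρ ρbar,
      abs_of_nonneg (by linarith : (0:ℝ) ≤ ρbar - ρ)] at this
    exact (abs_le.mp this).2
  have hk0 : 0 ≤ Δt / l := div_nonneg hΔt hl.le
  have hk1 : Δt / l * γ ≤ 1 := by
    rw [div_mul_eq_mul_div, div_le_one hl]; exact hΔtγ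
  constructor
  · nlinarith [mul_le_mul_of_nonneg_left (show -φ ≥ -(γ*ρ) by linarith) hk0,
      mul_le_mul_of_nonneg_right hk1 hρ0]
  · nlinarith [mul_le_mul_of_nonneg_left (show I ≤ γ*(ρbar-ρ) by linarith) hk0,
      mul_le_mul_of_nonneg_right hk1 (by linarith : (0:ℝ) ≤ ρbar - ρ)]
end

section
/- Fix n ∈ ℕ, a horizon T ∈ ℕ, an initial condition ρ₀ ∈ ℝⁿ, external demands w(t) ∈ ℝⁿ for t < T, Δt ∈ ℝ, an invertible diagonal matrix L with positive diagonal entries, an n×n matrix R = (β_{e,i}) with nonnegative entries, bounds s̄ ∈ (ℝ ∪ {+∞})ⁿ, and for each cell e concave functions d_e : ℝ → ℝ and s_e : ℝ → ℝ. Then the set of trajectory pairs ((ρ(t))_{t=0}^{T}, (φ(t))_{t=0}^{T−1}) in (ℝⁿ)^{T+1} × (ℝⁿ)^{T} satisfying: ρ(0) = ρ₀; the affine conservation law ρ(t+1) = ρ(t) + Δt·L⁻¹((R − I)φ(t) + w(t)) for all t < T; the relaxed demand constraints 0 ≤ φ_e(t) ≤ d_e(ρ_e(t)) for every cell e and t <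 T; the relaxed supply constraints Σ_i β_{e,i} φ_i(t) ≤ s_e(ρ_e(t)) for every cell e and t < T; and the bounds ρ_e(t) ≤ s̄_e for every cell e and t ≤ T — is a convex subset of (ℝⁿ)^{T+1} × (ℝⁿ)^{T}. -/
/-- convexity of the relaxed FNC problem (10) of the paper:
the set of trajectory pairs `(ρ, φ)` satisfying the initial condition, the
affine conservation law `ρ(t+1) = ρ(t) + Δt·L⁻¹((R − I)φ(t) + w(t))`, the
relaxed demand constraints `0 ≤ φ_e(t) ≤ d_e(ρ_e(t))` with concave demand
functions, the relaxed supply constraints `Σ_i β_{e,i} φ_i(t) ≤ s_e(ρ_e(t))`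
with concave supply functions, and the density bounds `ρ_e(t) ≤ s̄_e` (bounds
valued in `ℝ ∪ {±∞}`), is a convex subset of `(ℝⁿ)^{T+1} × (ℝⁿ)^T`. -/
theorem relaxed_fnc_feasible_set_convex
    (n T : ℕ) (ρ0 : Fin n → ℝ)
    (w : Fin T → Fin n → ℝ) (Δt : ℝ)
    (l : Fin n → ℝ) (hl : ∀ i, 0 < l i)
    (R : Matrix (Fin n) (Fin n) ℝ) (hR : ∀ e i, 0 ≤ R e i)
    (sbar : Fin n → EReal)
    (d s : Fin n → ℝ → ℝ)
    (hd : ∀ e, ConcaveOn ℝ Set.univ (d e))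
    (hs : ∀ e, ConcaveOn ℝ Set.univ (s e)) :
    Convex ℝ { P : (Fin (T + 1) → Fin n → ℝ) × (Fin T → Fin n → ℝ) |
      P.1 0 = ρ0 ∧
      (∀ t : Fin T, P.1 t.succ = P.1 t.castSucc +
        Δt • ((Matrix.diagonal l)⁻¹).mulVec ((R - 1).mulVec (P.2 t) + w t)) ∧
      (∀ t : Fin T, ∀ e, 0 ≤ P.2 t e ∧ P.2 t e ≤ d e (P.1 t.castSucc e)) ∧
      (∀ t : Fin T, ∀ e, (∑ i, R e i * P.2 t i) ≤ s e (P.1 t.castSucc e)) ∧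
      (∀ t : Fin (T + 1), ∀ e, (P.1 t e : EReal) ≤ sbar e) } := by
  rintro ⟨ρp, φp⟩ ⟨hp0, hpc, hpd, hps, hpb⟩ ⟨ρq, φq⟩ ⟨hq0, hqc, hqd, hqs, hqb⟩
    a b ha hb hab
  simp only [Set.mem_setOf_eq, Prod.fst_add, Prod.snd_add, Prod.smul_fst, Prod.smul_snd,
    Pi.add_apply, Pi.smul_apply, smul_eq_mul] at *
  refine ⟨?_, ?_, ?_, ?_, ?_⟩
  · rw [hp0, hq0, ← add_smul, hab, one_smul]
  · intro t
    rw [hpc t, hqc t]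
    simp only [Matrix.mulVec_add, Matrix.mulVec_smul, smul_add]
    have hw : ((Matrix.diagonal l)⁻¹).mulVec (w t)
        = a • ((Matrix.diagonal l)⁻¹).mulVec (w t)
          + b • ((Matrix.diagonal l)⁻¹).mulVec (w t) := by
      rw [← add_smul, hab, one_smul]
    rw [hw]
    match_scalars <;> first
      | ring1
      | linear_combination (Δt * (a + b)) * hab
  · intro t e
    have h1 := hpd t e
    have h2 := hqd t e
    have hc := (hd e).2 (Set.mem_univ (ρp t.castSucc e)) (Set.mem_univ (ρq t.castSucc e))
      ha hb hab
    simp only [smul_eq_mul, Pi.add_apply, Pi.smul_apply] at hc ⊢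
    constructor
    · exact add_nonneg (mul_nonneg ha h1.1) (mul_nonneg hb h2.1)
    · exact le_trans (add_le_add (mul_le_mul_of_nonneg_left h1.2 ha)
        (mul_le_mul_of_nonneg_left h2.2 hb)) hc
  · intro t e
    have hc := (hs e).2 (Set.mem_univ (ρp t.castSucc e)) (Set.mem_univ (ρq t.castSucc e))
      ha hb hab
    simp only [smul_eq_mul, Pi.add_apply, Pi.smul_apply] at hc ⊢
    calc ∑ i, R e i * (a * φp t i + b * φq t i)
        = a * (∑ i, R e i * φp t i) + b * (∑ i, R e i * φq t i) := by
          rw [Finset.mul_sum, Finset.mul_sum, ← Finset.sum_add_distrib]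
          exact Finset.sum_congr rfl fun i _ => by ring
      _ ≤ a * s e (ρp t.castSucc e) + b * s e (ρq t.castSucc e) :=
          add_le_add (mul_le_mul_of_nonneg_left (hps t e) ha)
            (mul_le_mul_of_nonneg_left (hqs t e) hb)
      _ ≤ _ := hc
  · intro t e
    have h1 := hpb t e
    have h2 := hqb t e
    generalize sbar e = c at h1 h2 ⊢
    induction c using EReal.rec with
    | bot => exact absurd h1 (by simp)
    | coe c =>
        have h1' : ρp t e ≤ c := EReal.coe_le_coe_iff.mp h1
        have h2' : ρq t e ≤ c := EReal.coe_le_coe_iff.mp h2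
        have : a * ρp t e + b * ρq t e ≤ c := by
          calc a * ρp t e + b * ρq t e ≤ a * c + b * c :=
                add_le_add (mul_le_mul_of_nonneg_left h1' ha)
                  (mul_le_mul_of_nonneg_left h2' hb)
            _ = c := by rw [← add_mul, hab, one_mul]
        exact_mod_cast this
    | top => exact le_top
end
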